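/- Let C be a small category with a thin, complete SFS (ℰ, ℳ) unital at ζ, and let ∗ be the induced binary operation on objects. For any objects a, b, c, the middle object of the unique (ℰ, ℳ)-factorization of the composite m_a ≫ e_b ≫ m_b ≫ e_c : a → c equals (a ∗ b) ∗ c (which also equals a ∗ (b ∗ c)). -/

import Mathlib

open CategoryTheory

universe v u

/-- A strict factorization system `(ℰ, ℳ)` on a category `C`: two classes of
morphisms, each containing identities and closed under composition, such that
every morphism factors uniquely as an `ℰ`-morphism followed by an `ℳ`-morphism. -/
structure SFS (C : Type u) [Category.{v} C] where
  E : ∀ ⦃X Y : C⦄, (X ⟶ Y) → Prop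
  M : ∀ ⦃X Y : C⦄, (X ⟶ Y) → Prop
  E_id : ∀ X : C, E (𝟙 X)
  M_id : ∀ X : C, M (𝟙 X)
  E_comp : ∀ ⦃X Y Z : C⦄ (f : X ⟶ Y) (g : Y ⟶ Z), E f → E g → E (f ≫ g)
  M_comp : ∀ ⦃X Y Z : C⦄ (f : X ⟶ Y) (g : Y ⟶ Z), M f → M g → M (f ≫ g)
  fact : ∀ ⦃X Y : C⦄ (f : X ⟶ Y),
    ∃! p : Σ d : C, (X ⟶ d) × (d ⟶ Y), E p.2.1 ∧ M p.2.2 ∧ p.2.1 ≫ p.2.2 = f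

namespace SFS

variable {C : Type u} [Category.{v} C] (S : SFS C)

/-- The SFS is thin: at most one `ℰ`-morphism and at most one `ℳ`-morphism
between any two objects. -/
def Thin : Prop :=
  (∀ ⦃X Y : C⦄ (f g : X ⟶ Y), S.E f → S.E g → f = g) ∧
  (∀ ⦃X Y : C⦄ (f g : X ⟶ Y), S.M f → S.M g → f = g)

/-- The SFS is unital at `ζ`: for every object `a` there is exactly one
`ℰ`-morphism `ζ ⟶ a` and exactly one `ℳ`-morphism `a ⟶ ζ`. -/
def UnitalAt (ζ : C) : Prop :=
  (∀ a : C, ∃! e : ζ ⟶ a, S.E e) ∧ (∀ a : C, ∃! m : a ⟶ ζ, S.M m)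

/-- The SFS is complete: both square-filling conditions. -/
def Complete : Prop :=
  (∀ ⦃a b c : C⦄ (e : a ⟶ b) (m : a ⟶ c), S.E e → S.M m →
    ∃ (d : C) (e' : c ⟶ d) (m' : b ⟶ d), S.E e' ∧ S.M m' ∧ m ≫ e' = e ≫ m') ∧
  (∀ ⦃b c d : C⦄ (e' : c ⟶ d) (m' : b ⟶ d), S.E e' → S.M m' →
    ∃ (a : C) (e : a ⟶ b) (m : a ⟶ c), S.E e ∧ S.M m ∧ m ≫ e' = e ≫ m')

/-- The middle object of the unique `(ℰ, ℳ)`-factorization of `f`. -/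
noncomputable def mid ⦃X Y : C⦄ (f : X ⟶ Y) : C :=
  (S.fact f).exists.choose.1

/-- The unique `ℰ`-morphism `ζ ⟶ a` (`e_a`) of an SFS unital at `ζ`. -/
noncomputable def eU {ζ : C} (h : S.UnitalAt ζ) (a : C) : ζ ⟶ a :=
  (h.1 a).exists.choose

/-- The unique `ℳ`-morphism `a ⟶ ζ` (`m_a`) of an SFS unital at `ζ`. -/
noncomputable def mU {ζ : C} (h : S.UnitalAt ζ) (a : C) : a ⟶ ζ :=
  (h.2 a).exists.choose

/-- The induced operation on objects: `a ∗ b` is the middle object of the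
unique `(ℰ, ℳ)`-factorization of `m_a ≫ e_b : a ⟶ b`. -/
noncomputable def star {ζ : C} (h : S.UnitalAt ζ) (a b : C) : C :=
  S.mid (S.mU h a ≫ S.eU h b)

lemma fact_data ⦃X Y : C⦄ (f : X ⟶ Y) :
    ∃ (e : X ⟶ S.mid f) (m : S.mid f ⟶ Y), S.E e ∧ S.M m ∧ e ≫ m = f := by
  obtain ⟨h1, h2, h3⟩ := (S.fact f).exists.choose_spec
  exact ⟨_, _, h1, h2, h3⟩

lemma mid_eq ⦃X Y : C⦄ (f : X ⟶ Y) {d : C} (e : X ⟶ d) (m : d ⟶ Y)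
    (hE : S.E e) (hM : S.M m) (hc : e ≫ m = f) : S.mid f = d := by
  have h := (S.fact f).unique (S.fact f).exists.choose_spec
    (show _ ∧ _ ∧ _ from ⟨hE, hM, hc⟩ : (fun p : Σ d : C, (X ⟶ d) × (d ⟶ Y) =>
      S.E p.2.1 ∧ S.M p.2.2 ∧ p.2.1 ≫ p.2.2 = f) ⟨d, e, m⟩)
  exact congrArg Sigma.fst h

lemma eU_E {ζ : C} (h : S.UnitalAt ζ) (a : C) : S.E (S.eU h a) :=
  (h.1 a).exists.choose_spec

lemma mU_M {ζ : C} (h : S.UnitalAt ζ) (a : C) : S.M (S.mU h a) :=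
  (h.2 a).exists.choose_spec

end SFS

/-- Let `C` be a small category with a thin, complete SFS `(ℰ, ℳ)`
unital at `ζ`, and let `∗` be the induced binary operation on objects. For any objects
`a, b, c`, the middle object of the unique `(ℰ, ℳ)`-factorization of the composite
`m_a ≫ e_b ≫ m_b ≫ e_c : a ⟶ c` equals `(a ∗ b) ∗ c` (which also equals
`a ∗ (b ∗ c)`). -/
theorem triple_product_mid {C : Type u} [SmallCategory C] (S : SFS C)
    (hT : S.Thin) (ζ : C) (hU : S.UnitalAt ζ) (hC : S.Complete) :
    ∀ a b c : C,
      S.mid (S.mU hU a ≫ S.eU hU b ≫ S.mU hU b ≫ S.eU hU c) =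
        S.star hU (S.star hU a b) c ∧
      S.mid (S.mU hU a ≫ S.eU hU b ≫ S.mU hU b ≫ S.eU hU c) =
        S.star hU a (S.star hU b c) := by
  intro a b c
  obtain ⟨e₁, m₁, hE1, hM1, h1⟩ := S.fact_data (S.mU hU a ≫ S.eU hU b)
  obtain ⟨e₂, m₂, hE2, hM2, h2⟩ := S.fact_data (S.mU hU (S.star hU a b) ≫ S.eU hU c)
  obtain ⟨e₃, m₃, hE3, hM3, h3⟩ := S.fact_data (S.mU hU b ≫ S.eU hU c)
  obtain ⟨e₄, m₄, hE4, hM4, h4⟩ := S.fact_data (S.mU hU a ≫ S.eU hU (S.star hU b c))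
  -- `m₁` lands in `a ∗ b` (definitional unfolding of `star`)
  have hm : m₁ ≫ S.mU hU b = S.mU hU (S.star hU a b) :=
    hT.2 _ _ (S.M_comp _ _ hM1 (S.mU_M hU b)) (S.mU_M hU _)
  have he : S.eU hU b ≫ e₃ = S.eU hU (S.star hU b c) :=
    hT.1 _ _ (S.E_comp _ _ (S.eU_E hU b) hE3) (S.eU_E hU _)
  constructor
  · refine S.mid_eq _ (e₁ ≫ e₂) m₂ (S.E_comp _ _ hE1 hE2) hM2 ?_
    calc (e₁ ≫ e₂) ≫ m₂ = e₁ ≫ (e₂ ≫ m₂) := Category.assoc _ _ _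
    _ = e₁ ≫ (m₁ ≫ S.mU hU b) ≫ S.eU hU c := by
      exact congrArg (fun x => e₁ ≫ x) (h2.trans (congrArg (· ≫ S.eU hU c) hm.symm))
    _ = (e₁ ≫ m₁) ≫ S.mU hU b ≫ S.eU hU c := by simp
    _ = S.mU hU a ≫ S.eU hU b ≫ S.mU hU b ≫ S.eU hU c := by rw [h1]; simp
  · refine S.mid_eq _ e₄ (m₄ ≫ m₃) hE4 (S.M_comp _ _ hM4 hM3) ?_
    calc e₄ ≫ m₄ ≫ m₃ = (e₄ ≫ m₄) ≫ m₃ := (Category.assoc _ _ _).symm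
    _ = (S.mU hU a ≫ S.eU hU b ≫ e₃) ≫ m₃ := by rw [h4, ← he]; rfl
    _ = S.mU hU a ≫ S.eU hU b ≫ S.mU hU b ≫ S.eU hU c := by
      simp only [Category.assoc, h3]
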